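/- Let α ∈ (0,1), c₁ > 0 and define F(x) = ∫_x^{c₁} Σ_{n=0}^∞ (Lⁿ G_{c₁})(y) dy where L and G_{c₁} are as in the paper. Then F is positive on [0, c₁), F(c₁) = 0, and F'(x) = -Σ_{n=0}^∞ (Lⁿ G_{c₁})(x) < 0 for x ∈ [0, c₁), with the series converging uniformly on [0,c₁]. -/

import Mathlib

/-!
Writing a real power of a negative base as `x ^ y = |x| ^ y * cos (y π)`, the kernel
`(1 - p ^ (-2/α) μ ^ (2/α)) ^ (-α)` is, for fixed `μ ∈ [-c₁, c₁]`, at most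
`1 + c₁ ^ α (|p - e₁| ^ (-α) + |p - e₂| ^ (-α))` for two points `e₁, e₂ ∈ [-c₁, c₁]`.
Since `α < 1`, its integral over any subinterval of `[-c₁, c₁]` is bounded by a constant `C`,
so `L` maps continuous functions on `[-c₁, c₁]` to continuous ones and turns a bound
`M (c₁ - x) ^ n` into `D M (c₁ - x) ^ (n + 1) / (n + 1)` with `D = C / Γ(1 - α)`. Starting from
`|G| ≤ D` this gives `|LⁿG(x)| ≤ D (D (c₁ - x)) ^ n / n!`, hence uniform convergence of the
series to a continuous sum, and the fundamental theorem of calculus gives `F' = -∑ LⁿG`.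
On `[0, c₁]` the kernel is nonnegative, so the sum dominates `G`, which is positive on `[0, c₁)`
because the kernel is at least `1` there. Working on `[-c₁, c₁]` rather than `[0, c₁]` is what
makes the derivative at `0` two-sided.
-/

open Real MeasureTheory intervalIntegral Set Filter Topology

/-- The operator `L`:
`(Lh)(x) = (1/Γ(1-α)) ∫_x^{c₁} ∫_μ^{c₁} (1 - p^{-2/α} μ^{2/α})^{-α} h(p) dp dμ`. -/
noncomputable def Lop (α c₁ : ℝ) (h : ℝ → ℝ) (x : ℝ) : ℝ :=
  (1 / Real.Gamma (1 - α)) *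
    ∫ μ in x..c₁, ∫ p in μ..c₁, (1 - p ^ (-(2/α)) * μ ^ (2/α)) ^ (-α) * h p

/-- `G_{c₁}(x) = (1/Γ(1-α)) ∫_x^{c₁} (1 - c₁^{-2/α} μ^{2/α})^{-α} dμ`. -/
noncomputable def Gker (α c₁ x : ℝ) : ℝ :=
  (1 / Real.Gamma (1 - α)) * ∫ μ in x..c₁, (1 - c₁ ^ (-(2/α)) * μ ^ (2/α)) ^ (-α)

namespace FractionalKernel

lemma rpow_eq_abs_rpow_mul (x y : ℝ) :
    x ^ y = |x| ^ y * if x < 0 then cos (y * π) else 1 := by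
  split_ifs with hx
  · rw [rpow_def_of_neg hx, rpow_def_of_pos (abs_pos.2 hx.ne), log_abs]
  · rw [abs_of_nonneg (not_lt.1 hx), mul_one]

lemma abs_one_sub_le_abs_one_sub_rpow {a b : ℝ} (ha : 0 ≤ a) (hb : 1 ≤ b) :
    |1 - a| ≤ |1 - a ^ b| := by
  rcases le_total a 1 with h | h
  · have : a ^ b ≤ a := by
      simpa using rpow_le_rpow_of_exponent_ge' ha h zero_le_one hb
    rw [abs_of_nonneg (by linarith), abs_of_nonneg (by linarith [rpow_nonneg ha b])]
    linarith
  · have : a ≤ a ^ b := by simpa using rpow_le_rpow_of_exponent_le h hb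
    rw [abs_of_nonpos (by linarith), abs_of_nonpos (by linarith)]
    linarith

/-- For `c > 0`, write `c a ^ β = (σ a) ^ β` with `σ = c ^ (1/β)`: the singularity sits at
`σ a = 1` and is no worse than that of `|1 - σ a| ^ (-α)` since `β ≥ 1`. -/
lemma abs_one_sub_mul_rpow_rpow_neg_le {α β a : ℝ} (hα : 0 ≤ α) (hβ : 1 ≤ β) (ha : 0 ≤ a)
    (c : ℝ) : |(1 - c * a ^ β) ^ (-α)| ≤ 1 + |1 - max c 0 ^ β⁻¹ * a| ^ (-α) := by
  have hrhs : 0 ≤ |1 - max c 0 ^ β⁻¹ * a| ^ (-α) := rpow_nonneg (abs_nonneg _) _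
  rcases le_or_gt c 0 with hc | hc
  · have h1 : 1 ≤ 1 - c * a ^ β := by nlinarith [rpow_nonneg ha β]
    have : |(1 - c * a ^ β) ^ (-α)| ≤ 1 := by
      rw [abs_of_nonneg (rpow_nonneg (by linarith) _)]
      exact rpow_le_one_of_one_le_of_nonpos h1 (by linarith)
    linarith
  set t := c ^ β⁻¹ * a
  have ht : 0 ≤ t := mul_nonneg (rpow_nonneg hc.le _) ha
  have hct : c * a ^ β = t ^ β := by
    rw [mul_rpow (rpow_nonneg hc.le _) ha, ← rpow_mul hc.le,
      inv_mul_cancel₀ (by linarith), rpow_one]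
  rw [max_eq_left hc.le] at hrhs ⊢
  rw [hct]
  refine (abs_rpow_le_abs_rpow _ _).trans ?_
  rcases eq_or_ne t 1 with h1 | h1
  · rw [h1, one_rpow, sub_self, abs_zero]
    linarith [zero_rpow_le_one (-α)]
  · have : |1 - t ^ β| ^ (-α) ≤ |1 - t| ^ (-α) :=
      rpow_le_rpow_of_nonpos (abs_pos.2 (sub_ne_zero.2 (Ne.symm h1)))
        (abs_one_sub_le_abs_one_sub_rpow ht hβ) (by linarith)
    linarith

lemma intervalIntegrable_abs_rpow {r : ℝ} (hr : -1 < r) (a b : ℝ) :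
    IntervalIntegrable (fun x => |x| ^ r) volume a b := by
  have hpos : ∀ c, 0 ≤ c → IntervalIntegrable (fun x => |x| ^ r) volume 0 c := fun c hc =>
    (intervalIntegrable_rpow' hr).congr <| by
      rw [uIoc_of_le hc]
      exact fun x hx => by simp only [abs_of_pos hx.1]
  have h0 : ∀ c, IntervalIntegrable (fun x => |x| ^ r) volume 0 c := fun c => by
    rcases le_total 0 c with hc | hc
    · exact hpos c hc
    · simpa using (IntervalIntegrable.iff_comp_neg (by simp)).1 (hpos (-c) (by linarith))
  exact (h0 a).symm.trans (h0 b)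

lemma integral_abs_rpow_symm {r R : ℝ} (hr : -1 < r) (hR : 0 ≤ R) :
    ∫ x in -R..R, |x| ^ r = 2 * (R ^ (r + 1) / (r + 1)) := by
  have hhalf : ∫ x in (0:ℝ)..R, |x| ^ r = R ^ (r + 1) / (r + 1) := by
    rw [intervalIntegral.integral_congr (g := fun x => x ^ r) fun x hx => by
      rw [uIcc_of_le hR] at hx; simp only [abs_of_nonneg hx.1],
      integral_rpow (Or.inl hr), zero_rpow (by linarith), sub_zero]
  rw [← intervalIntegral.integral_add_adjacent_intervals (b := 0)
    (intervalIntegrable_abs_rpow hr _ _) (intervalIntegrable_abs_rpow hr _ _),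
    ← hhalf]
  have := intervalIntegral.integral_comp_neg (a := 0) (b := R) (fun x => |x| ^ r)
  simp only [abs_neg, neg_zero] at this
  rw [← this]
  ring

lemma intervalIntegrable_abs_sub_rpow {r : ℝ} (hr : -1 < r) (e a b : ℝ) :
    IntervalIntegrable (fun x => |x - e| ^ r) volume a b := by
  simpa using (intervalIntegrable_abs_rpow hr (a - e) (b - e)).comp_sub_right e

lemma integral_abs_sub_rpow_le {r a b e R : ℝ} (hr : -1 < r) (hab : a ≤ b)
    (ha : |a - e| ≤ R) (hb : |b - e| ≤ R) :
    ∫ x in a..b, |x - e| ^ r ≤ 2 * (R ^ (r + 1) / (r + 1)) := by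
  have hR : 0 ≤ R := (abs_nonneg _).trans ha
  calc ∫ x in a..b, |x - e| ^ r ≤ ∫ x in e - R..e + R, |x - e| ^ r :=
        intervalIntegral.integral_mono_interval (by linarith [(abs_le.1 ha).1]) hab
          (by linarith [(abs_le.1 hb).2]) (ae_of_all _ fun x => rpow_nonneg (abs_nonneg _) _)
          (intervalIntegrable_abs_sub_rpow hr e _ _)
    _ = ∫ x in -R..R, |x| ^ r := by
        rw [intervalIntegral.integral_comp_sub_right (fun x => |x| ^ r)]
        ring_nf
    _ = 2 * (R ^ (r + 1) / (r + 1)) := integral_abs_rpow_symm hr hR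

noncomputable def kernel (α p μ : ℝ) : ℝ := (1 - p ^ (-(2 / α)) * μ ^ (2 / α)) ^ (-α)

/-- The factor in `x ^ (±2/α) = |x| ^ (±2/α) * negBaseFactor α x`, see `rpow_eq_abs_rpow_mul`. -/
noncomputable def negBaseFactor (α x : ℝ) : ℝ := if x < 0 then cos (2 / α * π) else 1

noncomputable def kernelShift (α p μ : ℝ) : ℝ :=
  max (negBaseFactor α p * negBaseFactor α μ) 0 ^ (α / 2)

lemma abs_negBaseFactor_le_one (α x : ℝ) : |negBaseFactor α x| ≤ 1 := by
  unfold negBaseFactor; split_ifs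
  · exact abs_cos_le_one _
  · simp

lemma kernelShift_mem_Icc {α : ℝ} (hα : 0 ≤ α) (p μ : ℝ) : kernelShift α p μ ∈ Icc 0 1 := by
  have h := abs_mul (negBaseFactor α p) (negBaseFactor α μ) ▸
    mul_le_one₀ (abs_negBaseFactor_le_one α p) (abs_nonneg _) (abs_negBaseFactor_le_one α μ)
  exact ⟨rpow_nonneg (le_max_right _ _) _,
    rpow_le_one (le_max_right _ _) (max_le (le_of_abs_le h) zero_le_one) (by positivity)⟩

lemma kernelShift_of_nonneg {α p : ℝ} (hp : 0 ≤ p) (μ : ℝ) :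
    kernelShift α p μ = kernelShift α 1 μ := by
  simp [kernelShift, negBaseFactor, hp.not_gt, zero_le_one.not_gt]

lemma kernelShift_of_neg {α p : ℝ} (hp : p < 0) (μ : ℝ) :
    kernelShift α p μ = kernelShift α (-1) μ := by
  simp [kernelShift, negBaseFactor, hp]

lemma abs_kernel_le {α : ℝ} (hα0 : 0 < α) (hα2 : α ≤ 2) (p μ : ℝ) :
    |kernel α p μ| ≤ 1 + |p| ^ α * |(|p| - kernelShift α p μ * |μ|)| ^ (-α) := by
  rcases eq_or_ne p 0 with rfl | hp
  · simp [kernel, zero_rpow (neg_ne_zero.2 (div_pos two_pos hα0).ne'), zero_rpow hα0.ne']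
  have hp' : 0 < |p| := abs_pos.2 hp
  have hA : p ^ (-(2 / α)) * μ ^ (2 / α)
      = (negBaseFactor α p * negBaseFactor α μ) * (|μ| / |p|) ^ (2 / α) := by
    rw [rpow_eq_abs_rpow_mul p, rpow_eq_abs_rpow_mul μ, div_rpow (abs_nonneg _) hp'.le,
      rpow_neg hp'.le]
    simp only [negBaseFactor, neg_mul, cos_neg]
    ring
  have key := abs_one_sub_mul_rpow_rpow_neg_le hα0.le ((one_le_div hα0).2 hα2)
    (div_nonneg (abs_nonneg μ) hp'.le) (negBaseFactor α p * negBaseFactor α μ)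
  rw [kernel, hA]
  refine key.trans (le_of_eq ?_)
  rw [inv_div, ← kernelShift,
    show 1 - kernelShift α p μ * (|μ| / |p|) = (|p| - kernelShift α p μ * |μ|) / |p| by
      field_simp,
    abs_div, abs_abs, div_rpow (abs_nonneg _) hp'.le, rpow_neg hp'.le, div_inv_eq_mul, mul_comm]

noncomputable def kernelDom (α c e₁ e₂ t : ℝ) : ℝ :=
  1 + c ^ α * (|t - e₁| ^ (-α) + |t - e₂| ^ (-α))

lemma exists_abs_kernel_le_kernelDom {α c μ : ℝ} (hα0 : 0 < α) (hα2 : α ≤ 2)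
    (hμ : μ ∈ Icc (-c) c) :
    ∃ e₁ ∈ Icc (-c) c, ∃ e₂ ∈ Icc (-c) c,
      ∀ p ∈ Icc μ c, |kernel α p μ| ≤ kernelDom α c e₁ e₂ p := by
  have hμ' : |μ| ≤ c := abs_le.2 hμ
  have hshift : ∀ q, kernelShift α q μ * |μ| ≤ c := fun q =>
    (mul_le_of_le_one_left (abs_nonneg μ) (kernelShift_mem_Icc hα0.le q μ).2).trans hμ'
  have hshift₀ : ∀ q, 0 ≤ kernelShift α q μ * |μ| := fun q =>
    mul_nonneg (kernelShift_mem_Icc hα0.le q μ).1 (abs_nonneg μ)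
  have he₁ := hshift 1
  have he₁' := hshift₀ 1
  have he₂ := hshift (-1)
  have he₂' := hshift₀ (-1)
  set e₁ := kernelShift α 1 μ * |μ|
  set e₂ := -(kernelShift α (-1) μ * |μ|)
  refine ⟨e₁, ⟨by linarith, he₁⟩, e₂, ⟨by linarith, by linarith⟩,
    fun p hp => (abs_kernel_le hα0 hα2 p μ).trans ?_⟩
  have hsing :
      |(|p| - kernelShift α p μ * |μ|)| ^ (-α) ≤ |p - e₁| ^ (-α) + |p - e₂| ^ (-α) := by
    have h₁ := rpow_nonneg (abs_nonneg (p - e₁)) (-α)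
    have h₂ := rpow_nonneg (abs_nonneg (p - e₂)) (-α)
    rcases le_or_gt 0 p with hp0 | hp0
    · rw [abs_of_nonneg hp0, kernelShift_of_nonneg hp0]
      linarith
    · rw [abs_of_neg hp0, kernelShift_of_neg hp0, ← abs_neg, neg_sub', sub_neg_eq_add,
        neg_neg, show p - e₂ = p + kernelShift α (-1) μ * |μ| by ring]
      linarith
  have hpα : |p| ^ α ≤ c ^ α :=
    rpow_le_rpow (abs_nonneg p) (abs_le.2 ⟨by linarith [hμ.1, hp.1], hp.2⟩) hα0.le
  unfold kernelDom
  gcongr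
  exact rpow_nonneg (by linarith [hμ.1, hμ.2]) α

lemma abs_kernel_self_le_kernelDom {α c μ : ℝ} (hα0 : 0 < α) (hα2 : α ≤ 2)
    (hμ : μ ∈ Ioo (-c) c) : |kernel α c μ| ≤ kernelDom α c c (-c) μ := by
  have hμ' : |μ| < c := abs_lt.2 hμ
  have hc : 0 < c := (abs_nonneg μ).trans_lt hμ'
  have hshift : kernelShift α c μ * |μ| ≤ |μ| :=
    mul_le_of_le_one_left (abs_nonneg μ) (kernelShift_mem_Icc hα0.le c μ).2
  have hsing : |(c - kernelShift α c μ * |μ|)| ^ (-α) ≤ (c - |μ|) ^ (-α) := by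
    rw [abs_of_pos (by linarith)]
    exact rpow_le_rpow_of_nonpos (by linarith) (by linarith) (by linarith)
  have hedge : (c - |μ|) ^ (-α) ≤ |μ - c| ^ (-α) + |μ - -c| ^ (-α) := by
    have h₁ := rpow_nonneg (abs_nonneg (μ - c)) (-α)
    have h₂ := rpow_nonneg (abs_nonneg (μ - -c)) (-α)
    rcases le_or_gt 0 μ with hμ0 | hμ0
    · rw [abs_of_nonneg hμ0, abs_sub_comm, abs_of_pos (by linarith [hμ.2] : 0 < c - μ)]
      linarith
    · rw [abs_of_neg hμ0, sub_neg_eq_add, sub_neg_eq_add,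
        abs_of_pos (by linarith [hμ.1] : 0 < μ + c), add_comm c μ]
      linarith
  have := abs_kernel_le hα0 hα2 c μ
  rw [abs_of_pos hc] at this
  refine this.trans ?_
  unfold kernelDom
  gcongr
  exact hsing.trans hedge

lemma intervalIntegrable_kernelDom {α : ℝ} (hα1 : α < 1) (c e₁ e₂ a b : ℝ) :
    IntervalIntegrable (kernelDom α c e₁ e₂) volume a b :=
  intervalIntegrable_const.add
    (((intervalIntegrable_abs_sub_rpow (by linarith) e₁ a b).add
      (intervalIntegrable_abs_sub_rpow (by linarith) e₂ a b)).const_mul _)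

noncomputable def kernelMass (α c : ℝ) : ℝ :=
  2 * c + 4 * c ^ α * ((2 * c) ^ (1 - α) / (1 - α))

lemma integral_kernelDom_le {α c e₁ e₂ a b : ℝ} (hα1 : α < 1) (hab : a ≤ b)
    (ha : a ∈ Icc (-c) c) (hb : b ∈ Icc (-c) c) (he₁ : e₁ ∈ Icc (-c) c)
    (he₂ : e₂ ∈ Icc (-c) c) :
    ∫ t in a..b, kernelDom α c e₁ e₂ t ≤ kernelMass α c := by
  have hc : 0 ≤ c := by linarith [ha.1, ha.2]
  have hsing : ∀ e ∈ Icc (-c) c,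
      ∫ t in a..b, |t - e| ^ (-α) ≤ 2 * ((2 * c) ^ (1 - α) / (1 - α)) := fun e he => by
      simpa [neg_add_eq_sub] using integral_abs_sub_rpow_le (r := -α) (R := 2 * c)
        (by linarith) hab (abs_le.2 ⟨by linarith [ha.1, he.2], by linarith [ha.2, he.1]⟩)
        (abs_le.2 ⟨by linarith [hb.1, he.2], by linarith [hb.2, he.1]⟩)
  have hcα : 0 ≤ c ^ α := rpow_nonneg hc α
  unfold kernelDom kernelMass
  have h₁ := intervalIntegrable_abs_sub_rpow (r := -α) (by linarith) e₁ a b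
  have h₂ := intervalIntegrable_abs_sub_rpow (r := -α) (by linarith) e₂ a b
  rw [intervalIntegral.integral_add intervalIntegrable_const ((h₁.add h₂).const_mul _),
    intervalIntegral.integral_const_mul, intervalIntegral.integral_add h₁ h₂,
    intervalIntegral.integral_const, smul_eq_mul, mul_one]
  nlinarith [hsing e₁ he₁, hsing e₂ he₂, ha.1, hb.2]

lemma kernel_eq_of_pos {α p μ : ℝ} (hp : 0 < p) (hμ : 0 ≤ μ) :
    kernel α p μ = (1 - (μ / p) ^ (2 / α)) ^ (-α) := by
  rw [kernel, div_rpow hμ hp.le, rpow_neg hp.le, inv_mul_eq_div]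

lemma kernel_nonneg {α p μ : ℝ} (hα0 : 0 < α) (hμ : 0 ≤ μ) (hμp : μ ≤ p) :
    0 ≤ kernel α p μ := by
  rcases (hμ.trans hμp).eq_or_lt with hp | hp
  · simp [kernel, ← hp, zero_rpow (neg_ne_zero.2 (div_pos two_pos hα0).ne')]
  rw [kernel_eq_of_pos hp hμ]
  refine rpow_nonneg (sub_nonneg.2 (rpow_le_one (div_nonneg hμ hp.le) ?_ (by positivity))) _
  rwa [div_le_one hp]

lemma one_le_kernel {α p μ : ℝ} (hα0 : 0 < α) (hμ : 0 ≤ μ) (hμp : μ < p) :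
    1 ≤ kernel α p μ := by
  have hp : 0 < p := hμ.trans_lt hμp
  rw [kernel_eq_of_pos hp hμ]
  have h₀ : 0 ≤ (μ / p) ^ (2 / α) := rpow_nonneg (div_nonneg hμ hp.le) _
  have h₁ : (μ / p) ^ (2 / α) < 1 :=
    rpow_lt_one (div_nonneg hμ hp.le) ((div_lt_one hp).2 hμp) (by positivity)
  exact one_le_rpow_of_pos_of_le_one_of_nonpos (by linarith) (by linarith) (by linarith)

lemma measurable_kernel (α : ℝ) : Measurable fun q : ℝ × ℝ => kernel α q.1 q.2 := by
  unfold kernel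
  fun_prop

lemma stronglyMeasurable_intervalIntegral_prod {F : ℝ × ℝ → ℝ} (hF : StronglyMeasurable F)
    (b : ℝ) : StronglyMeasurable fun μ => ∫ p in μ..b, F (μ, p) := by
  have h : ∀ s : Set (ℝ × ℝ), MeasurableSet s →
      StronglyMeasurable fun μ => ∫ p, s.indicator F (μ, p) :=
    fun s hs => (hF.indicator hs).integral_prod_right'
  convert (h {q | q.1 < q.2 ∧ q.2 ≤ b} ?_).sub (h {q | b < q.2 ∧ q.2 ≤ q.1} ?_) using 1
  · funext μ
    rw [intervalIntegral, ← MeasureTheory.integral_indicator measurableSet_Ioc,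
      ← MeasureTheory.integral_indicator measurableSet_Ioc]
    rfl
  · exact (measurableSet_lt measurable_fst measurable_snd).inter
      (measurableSet_le measurable_snd measurable_const)
  · exact (measurableSet_lt measurable_const measurable_snd).inter
      (measurableSet_le measurable_snd measurable_fst)

lemma Gamma_one_sub_pos {α : ℝ} (hα1 : α < 1) : 0 < Gamma (1 - α) :=
  Gamma_pos_of_pos (by linarith)

lemma Lop_eq (α c : ℝ) (h : ℝ → ℝ) (x : ℝ) :
    Lop α c h x = 1 / Gamma (1 - α) * ∫ μ in x..c, ∫ p in μ..c, kernel α p μ * h p := rfl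

lemma Gker_eq (α c x : ℝ) : Gker α c x = 1 / Gamma (1 - α) * ∫ μ in x..c, kernel α c μ := rfl

lemma abs_integral_kernel_mul_le {α c μ B : ℝ} {h : ℝ → ℝ} (hα0 : 0 < α) (hα1 : α < 1)
    (hμ : μ ∈ Icc (-c) c) (hB : ∀ p ∈ Icc μ c, |h p| ≤ B) :
    |∫ p in μ..c, kernel α p μ * h p| ≤ B * kernelMass α c := by
  obtain ⟨e₁, he₁, e₂, he₂, hK⟩ := exists_abs_kernel_le_kernelDom hα0 (by linarith) hμ
  have hB₀ : 0 ≤ B := (abs_nonneg _).trans (hB c ⟨hμ.2, le_rfl⟩)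
  have hpt : ∀ p ∈ Ioc μ c, ‖kernel α p μ * h p‖ ≤ B * kernelDom α c e₁ e₂ p := by
    intro p hp
    have hp' : p ∈ Icc μ c := ⟨hp.1.le, hp.2⟩
    rw [norm_mul, mul_comm B]
    exact mul_le_mul (hK p hp') (hB p hp') (abs_nonneg _) ((abs_nonneg _).trans (hK p hp'))
  calc |∫ p in μ..c, kernel α p μ * h p|
      ≤ ∫ p in μ..c, B * kernelDom α c e₁ e₂ p :=
        intervalIntegral.norm_integral_le_of_norm_le hμ.2 (ae_of_all _ hpt)
          ((intervalIntegrable_kernelDom hα1 c e₁ e₂ μ c).const_mul B)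
    _ = B * ∫ p in μ..c, kernelDom α c e₁ e₂ p := intervalIntegral.integral_const_mul _ _
    _ ≤ B * kernelMass α c := mul_le_mul_of_nonneg_left
        (integral_kernelDom_le hα1 hμ.2 hμ ⟨by linarith [hμ.1, hμ.2], le_rfl⟩ he₁ he₂) hB₀

lemma integral_sub_pow (c x : ℝ) (n : ℕ) :
    ∫ μ in x..c, (c - μ) ^ n = (c - x) ^ (n + 1) / (n + 1) := by
  simp [intervalIntegral.integral_comp_sub_left (fun t => t ^ n) c, integral_pow]

lemma abs_Lop_le {α c M x : ℝ} {n : ℕ} {h : ℝ → ℝ} (hα0 : 0 < α) (hα1 : α < 1) (hM : 0 ≤ M)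
    (hh : ∀ p ∈ Icc (-c) c, |h p| ≤ M * (c - p) ^ n) (hx : x ∈ Icc (-c) c) :
    |Lop α c h x| ≤ kernelMass α c / Gamma (1 - α) * M * ((c - x) ^ (n + 1) / (n + 1)) := by
  have hΓ := Gamma_one_sub_pos hα1
  have hinner : ∀ μ ∈ Ioc x c,
      ‖∫ p in μ..c, kernel α p μ * h p‖ ≤ kernelMass α c * M * (c - μ) ^ n := by
    intro μ hμ
    have hμ' : μ ∈ Icc (-c) c := ⟨by linarith [hx.1, hμ.1], hμ.2⟩
    rw [Real.norm_eq_abs, mul_assoc, mul_comm]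
    refine abs_integral_kernel_mul_le hα0 hα1 hμ' fun p hp =>
      (hh p ⟨hμ'.1.trans hp.1, hp.2⟩).trans ?_
    gcongr
    · linarith [hp.2]
    · exact hp.1
  have hint := intervalIntegral.norm_integral_le_of_norm_le hx.2 (ae_of_all _ hinner)
    ((continuous_const.mul ((continuous_const.sub continuous_id).pow n)).intervalIntegrable
      (μ := volume) x c)
  rw [intervalIntegral.integral_const_mul, integral_sub_pow, Real.norm_eq_abs] at hint
  rw [Lop_eq, abs_mul, abs_of_pos (by positivity)]
  calc 1 / Gamma (1 - α) * |∫ μ in x..c, ∫ p in μ..c, kernel α p μ * h p|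
      ≤ 1 / Gamma (1 - α) * (kernelMass α c * M * ((c - x) ^ (n + 1) / (n + 1))) := by gcongr
    _ = kernelMass α c / Gamma (1 - α) * M * ((c - x) ^ (n + 1) / (n + 1)) := by ring

lemma Lop_nonneg {α c x : ℝ} {h : ℝ → ℝ} (hα0 : 0 < α) (hα1 : α < 1)
    (hh : ∀ p ∈ Icc 0 c, 0 ≤ h p) (hx : x ∈ Icc 0 c) : 0 ≤ Lop α c h x := by
  have hΓ := Gamma_one_sub_pos hα1
  refine mul_nonneg (by positivity) (intervalIntegral.integral_nonneg hx.2 fun μ hμ => ?_)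
  exact intervalIntegral.integral_nonneg hμ.2 fun p hp =>
    mul_nonneg (kernel_nonneg hα0 (hx.1.trans hμ.1) hp.1)
      (hh p ⟨hx.1.trans (hμ.1.trans hp.1), hp.2⟩)

lemma Lop_congr {α c x : ℝ} {h h' : ℝ → ℝ} (hEq : EqOn h h' (uIcc x c)) :
    Lop α c h x = Lop α c h' x := by
  rw [Lop_eq, Lop_eq]
  congr 1
  refine intervalIntegral.integral_congr fun μ hμ =>
    intervalIntegral.integral_congr fun p hp => ?_
  simp only [hEq (uIcc_subset_uIcc hμ right_mem_uIcc hp)]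

lemma integrableOn_integral_kernel_mul {α c B : ℝ} {h : ℝ → ℝ} (hα0 : 0 < α) (hα1 : α < 1)
    (hh : Measurable h) (hB : ∀ p ∈ Icc (-c) c, |h p| ≤ B) :
    IntegrableOn (fun μ => ∫ p in μ..c, kernel α p μ * h p) (Icc (-c) c) := by
  have hmeas := stronglyMeasurable_intervalIntegral_prod
    (((measurable_kernel α).comp measurable_swap).mul (hh.comp measurable_snd)).stronglyMeasurable
    c
  refine Integrable.mono' (integrableOn_const (C := B * kernelMass α c) measure_Icc_lt_top.ne)
    hmeas.aestronglyMeasurable (ae_restrict_of_forall_mem measurableSet_Icc fun μ hμ => ?_)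
  rw [Real.norm_eq_abs]
  exact abs_integral_kernel_mul_le hα0 hα1 hμ fun p hp => hB p ⟨hμ.1.trans hp.1, hp.2⟩

lemma continuousOn_integral_Icc_left {g : ℝ → ℝ} {a b : ℝ} (hab : a ≤ b)
    (hg : IntegrableOn g (Icc a b)) : ContinuousOn (fun x => ∫ t in x..b, g t) (Icc a b) := by
  rw [← uIcc_of_le hab] at hg ⊢
  exact intervalIntegral.continuousOn_primitive_interval_left hg

lemma continuousOn_Lop {α c : ℝ} {h : ℝ → ℝ} (hα0 : 0 < α) (hα1 : α < 1) (hc : 0 ≤ c)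
    (hh : ContinuousOn h (Icc (-c) c)) : ContinuousOn (Lop α c h) (Icc (-c) c) := by
  have hJ : -c ≤ c := by linarith
  obtain ⟨B, hB⟩ := isCompact_Icc.exists_bound_of_continuousOn hh
  -- `Lop α c h` only sees `h` on `[-c, c]`; extending it continuously makes the inner integral
  -- jointly measurable.
  set h' := IccExtend hJ ((Icc (-c) c).domRestrict h)
  have hh' : Continuous h' := hh.domRestrict.Icc_extend'
  have hEq : EqOn h h' (Icc (-c) c) := fun p hp => by simp [h', IccExtend_of_mem hJ _ hp]
  have hint := integrableOn_integral_kernel_mul hα0 hα1 hh'.measurable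
    fun p hp => hEq hp ▸ Real.norm_eq_abs (h p) ▸ hB p hp
  refine ((continuousOn_const (c := 1 / Gamma (1 - α))).mul
    (continuousOn_integral_Icc_left hJ hint)).congr fun x hx => ?_
  rw [Lop_congr (hEq.mono ?_), Lop_eq]
  · rfl
  · rw [uIcc_of_le hx.2]
    exact Icc_subset_Icc hx.1 le_rfl

lemma integrableOn_kernel_self {α c : ℝ} (hα0 : 0 < α) (hα1 : α < 1) (hc : 0 ≤ c) :
    IntegrableOn (kernel α c) (Icc (-c) c) := by
  rw [integrableOn_Icc_iff_integrableOn_Ioo]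
  refine Integrable.mono'
    ((intervalIntegrable_iff_integrableOn_Ioo_of_le (by linarith)).1
      (intervalIntegrable_kernelDom hα1 c c (-c) (-c) c))
    ((measurable_kernel α).comp measurable_prodMk_left).aestronglyMeasurable
    (ae_restrict_of_forall_mem measurableSet_Ioo fun μ hμ => ?_)
  rw [Real.norm_eq_abs]
  exact abs_kernel_self_le_kernelDom hα0 (by linarith) hμ

lemma continuousOn_Gker {α c : ℝ} (hα0 : 0 < α) (hα1 : α < 1) (hc : 0 ≤ c) :
    ContinuousOn (Gker α c) (Icc (-c) c) :=
  continuousOn_const.mul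
    (continuousOn_integral_Icc_left (by linarith) (integrableOn_kernel_self hα0 hα1 hc))

lemma abs_Gker_le {α c x : ℝ} (hα0 : 0 < α) (hα1 : α < 1) (hx : x ∈ Icc (-c) c) :
    |Gker α c x| ≤ kernelMass α c / Gamma (1 - α) := by
  have hΓ := Gamma_one_sub_pos hα1
  have hc : 0 ≤ c := by linarith [hx.1, hx.2]
  have hne : ∀ᵐ t ∂volume, t ≠ c := by simp [ae_iff]
  have hint := intervalIntegral.norm_integral_le_of_norm_le hx.2
    (hne.mono fun t htc ht => Real.norm_eq_abs _ ▸ abs_kernel_self_le_kernelDom hα0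
      (by linarith) ⟨by linarith [hx.1, ht.1], lt_of_le_of_ne ht.2 htc⟩)
    (intervalIntegrable_kernelDom hα1 c c (-c) x c)
  have hmass := integral_kernelDom_le hα1 hx.2 hx ⟨by linarith, le_rfl⟩ ⟨by linarith, le_rfl⟩
    ⟨le_rfl, by linarith⟩
  rw [Gker_eq, abs_mul, abs_of_pos (by positivity), one_div_mul_eq_div]
  gcongr
  exact hint.trans hmass

lemma Gker_nonneg {α c x : ℝ} (hα0 : 0 < α) (hα1 : α < 1) (hx : x ∈ Icc 0 c) :
    0 ≤ Gker α c x := by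
  have hΓ := Gamma_one_sub_pos hα1
  exact mul_nonneg (by positivity) (intervalIntegral.integral_nonneg hx.2 fun μ hμ =>
    kernel_nonneg hα0 (hx.1.trans hμ.1) hμ.2)

lemma Gker_pos {α c x : ℝ} (hα0 : 0 < α) (hα1 : α < 1) (hx : x ∈ Ico 0 c) :
    0 < Gker α c x := by
  have hΓ := Gamma_one_sub_pos hα1
  have hint : IntervalIntegrable (kernel α c) volume x c :=
    ((integrableOn_kernel_self hα0 hα1 (by linarith [hx.1, hx.2])).mono_set <| by
      rw [uIcc_of_le hx.2.le]
      exact Icc_subset_Icc (by linarith [hx.1, hx.2]) le_rfl).intervalIntegrable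
  exact mul_pos (by positivity) (intervalIntegral.intervalIntegral_pos_of_pos_on hint
    (fun μ hμ => one_pos.trans_le (one_le_kernel hα0 (hx.1.trans hμ.1.le) hμ.2)) hx.2)

lemma kernelMass_nonneg {α c : ℝ} (hα1 : α < 1) (hc : 0 ≤ c) : 0 ≤ kernelMass α c := by
  have : 0 ≤ (2 * c) ^ (1 - α) / (1 - α) :=
    div_nonneg (rpow_nonneg (by linarith) _) (by linarith)
  unfold kernelMass
  have := rpow_nonneg hc α
  positivity

lemma continuousOn_iterate_Lop {α c : ℝ} {h : ℝ → ℝ} (hα0 : 0 < α) (hα1 : α < 1) (hc : 0 ≤ c)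
    (hh : ContinuousOn h (Icc (-c) c)) (n : ℕ) :
    ContinuousOn ((Lop α c)^[n] h) (Icc (-c) c) := by
  induction n with
  | zero => exact hh
  | succ n ih =>
    rw [Function.iterate_succ']
    exact continuousOn_Lop hα0 hα1 hc ih

lemma iterate_Lop_nonneg {α c : ℝ} {h : ℝ → ℝ} (hα0 : 0 < α) (hα1 : α < 1)
    (hh : ∀ p ∈ Icc 0 c, 0 ≤ h p) (n : ℕ) : ∀ x ∈ Icc 0 c, 0 ≤ (Lop α c)^[n] h x := by
  induction n with
  | zero => exact hh
  | succ n ih =>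
    rw [Function.iterate_succ']
    exact fun x hx => Lop_nonneg hα0 hα1 ih hx

lemma abs_iterate_Lop_le {α c B : ℝ} {h : ℝ → ℝ} (hα0 : 0 < α) (hα1 : α < 1) (hc : 0 ≤ c)
    (hB : 0 ≤ B) (hh : ∀ p ∈ Icc (-c) c, |h p| ≤ B) (n : ℕ) :
    ∀ x ∈ Icc (-c) c,
      |(Lop α c)^[n] h x|
        ≤ B * (kernelMass α c / Gamma (1 - α) * (c - x)) ^ n / n.factorial := by
  set D := kernelMass α c / Gamma (1 - α)
  have hD : 0 ≤ D := div_nonneg (kernelMass_nonneg hα1 hc) (Gamma_one_sub_pos hα1).le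
  induction n with
  | zero => simpa using hh
  | succ n ih =>
    intro x hx
    rw [Function.iterate_succ_apply']
    refine (abs_Lop_le hα0 hα1 (M := B * D ^ n / n.factorial) (by positivity)
      (fun p hp => (ih p hp).trans_eq (by rw [mul_pow]; ring)) hx).trans_eq ?_
    change D * _ * _ = _
    rw [Nat.factorial_succ, Nat.cast_mul, Nat.cast_succ, mul_pow]
    field_simp
    ring

lemma norm_iterate_Lop_Gker_le {α c x : ℝ} (hα0 : 0 < α) (hα1 : α < 1) (hc : 0 ≤ c) (n : ℕ)
    (hx : x ∈ Icc (-c) c) :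
    ‖(Lop α c)^[n] (Gker α c) x‖ ≤ kernelMass α c / Gamma (1 - α) *
      ((kernelMass α c / Gamma (1 - α) * (2 * c)) ^ n / n.factorial) := by
  have hD : 0 ≤ kernelMass α c / Gamma (1 - α) :=
    div_nonneg (kernelMass_nonneg hα1 hc) (Gamma_one_sub_pos hα1).le
  refine (abs_iterate_Lop_le hα0 hα1 hc hD (fun p hp => abs_Gker_le hα0 hα1 hp) n x hx).trans
    ?_
  have hcx : 0 ≤ c - x := by linarith [hx.2]
  rw [mul_div_assoc]
  gcongr
  linarith [hx.1]

lemma summable_iterate_Lop_Gker_majorant (α c : ℝ) :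
    Summable fun n : ℕ => kernelMass α c / Gamma (1 - α) *
      ((kernelMass α c / Gamma (1 - α) * (2 * c)) ^ n / n.factorial) :=
  (summable_pow_div_factorial _).mul_left _

lemma tendstoUniformlyOn_sum_iterate_Lop_Gker {α c : ℝ} (hα0 : 0 < α) (hα1 : α < 1)
    (hc : 0 ≤ c) :
    TendstoUniformlyOn (fun k x => ∑ n ∈ Finset.range k, (Lop α c)^[n] (Gker α c) x)
      (fun x => ∑' n, (Lop α c)^[n] (Gker α c) x) atTop (Icc (-c) c) :=
  tendstoUniformlyOn_tsum_nat (summable_iterate_Lop_Gker_majorant α c)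
    fun n _ hx => norm_iterate_Lop_Gker_le hα0 hα1 hc n hx

lemma continuousOn_tsum_iterate_Lop_Gker {α c : ℝ} (hα0 : 0 < α) (hα1 : α < 1) (hc : 0 ≤ c) :
    ContinuousOn (fun x => ∑' n, (Lop α c)^[n] (Gker α c) x) (Icc (-c) c) :=
  (tendstoUniformlyOn_sum_iterate_Lop_Gker hα0 hα1 hc).continuousOn <|
    Frequently.of_forall fun _ => continuousOn_finsetSum _ fun n _ =>
      continuousOn_iterate_Lop hα0 hα1 hc (continuousOn_Gker hα0 hα1 hc) n

lemma Gker_le_tsum_iterate_Lop {α c x : ℝ} (hα0 : 0 < α) (hα1 : α < 1) (hx : x ∈ Icc 0 c) :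
    Gker α c x ≤ ∑' n, (Lop α c)^[n] (Gker α c) x := by
  have hc : 0 ≤ c := hx.1.trans hx.2
  have hsum : Summable fun n => (Lop α c)^[n] (Gker α c) x :=
    (summable_iterate_Lop_Gker_majorant α c).of_norm_bounded
      fun n => norm_iterate_Lop_Gker_le hα0 hα1 hc n ⟨by linarith [hx.1], hx.2⟩
  rw [hsum.tsum_eq_zero_add, Function.iterate_zero_apply]
  exact le_add_of_nonneg_right (tsum_nonneg fun n =>
    iterate_Lop_nonneg hα0 hα1 (fun _ hp => Gker_nonneg hα0 hα1 hp) (n + 1) x hx)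

end FractionalKernel

open FractionalKernel

/-- Let `F(x) = ∫_x^{c₁} Σ_{n=0}^∞ (LⁿG_{c₁})(y) dy`. Then the series converges
uniformly on `[0,c₁]`, `F > 0` on `[0,c₁)`, `F(c₁) = 0`, and for `x ∈ [0,c₁)`
`F'(x) = -Σ_{n=0}^∞ (LⁿG_{c₁})(x) < 0`. -/
theorem stmt8 (α c₁ : ℝ) (hα0 : 0 < α) (hα1 : α < 1) (hc₁ : 0 < c₁) :
    TendstoUniformlyOn
      (fun k x => ∑ n ∈ Finset.range k, ((Lop α c₁)^[n] (Gker α c₁)) x)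
      (fun x => ∑' n : ℕ, ((Lop α c₁)^[n] (Gker α c₁)) x)
      atTop (Set.Icc 0 c₁) ∧
    (∀ x ∈ Set.Ico (0:ℝ) c₁,
      0 < ∫ y in x..c₁, ∑' n : ℕ, ((Lop α c₁)^[n] (Gker α c₁)) y) ∧
    (∫ y in c₁..c₁, ∑' n : ℕ, ((Lop α c₁)^[n] (Gker α c₁)) y) = 0 ∧
    (∀ x ∈ Set.Ico (0:ℝ) c₁,
      HasDerivAt (fun x' => ∫ y in x'..c₁, ∑' n : ℕ, ((Lop α c₁)^[n] (Gker α c₁)) y)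
        (-(∑' n : ℕ, ((Lop α c₁)^[n] (Gker α c₁)) x)) x ∧
      -(∑' n : ℕ, ((Lop α c₁)^[n] (Gker α c₁)) x) < 0) := by
  set S := fun x => ∑' n : ℕ, ((Lop α c₁)^[n] (Gker α c₁)) x
  have hS : ContinuousOn S (Icc (-c₁) c₁) := continuousOn_tsum_iterate_Lop_Gker hα0 hα1 hc₁.le
  have hS_pos : ∀ x ∈ Ico 0 c₁, 0 < S x := fun x hx =>
    (Gker_pos hα0 hα1 hx).trans_le (Gker_le_tsum_iterate_Lop hα0 hα1 (Ico_subset_Icc_self hx))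
  have hS_int : ∀ x ∈ Ico 0 c₁, IntervalIntegrable S volume x c₁ := fun x hx =>
    (hS.mono <| by rw [uIcc_of_le hx.2.le]; exact Icc_subset_Icc (by linarith [hx.1]) le_rfl
      ).intervalIntegrable
  refine ⟨(tendstoUniformlyOn_sum_iterate_Lop_Gker hα0 hα1 hc₁.le).mono
      (Icc_subset_Icc (by linarith) le_rfl), fun x hx => ?_, intervalIntegral.integral_same,
    fun x hx => ⟨?_, neg_neg_of_pos (hS_pos x hx)⟩⟩
  · exact intervalIntegral.intervalIntegral_pos_of_pos_on (hS_int x hx)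
      (fun y hy => hS_pos y ⟨hx.1.trans hy.1.le, hy.2⟩) hx.2
  · have hx' : x ∈ Ioo (-c₁) c₁ := ⟨by linarith [hx.1], hx.2⟩
    exact intervalIntegral.integral_hasDerivAt_left (hS_int x hx)
      ((hS.mono Ioo_subset_Icc_self).stronglyMeasurableAtFilter isOpen_Ioo x hx')
      (hS.continuousAt (Icc_mem_nhds hx'.1 hx'.2))
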